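/- Let n ≥ 1 and let f ∈ W^{2,2}(0, π/n) satisfy f(0) = f(π/n) = 0. Then for every θ ∈ [0, π/n], f(θ)² ≤ (π³/(48 n³)) ∫₀^{π/n} f''(φ)² dφ. -/

import Mathlib

/-!
With `L = π / n`, the Dirichlet Green's function `G` of `d²/dφ²` on `[0, L]` represents
`f(θ) = ∫₀ᴸ G(θ, φ) f''(φ) dφ`, so by Cauchy–Schwarz `f(θ)² ≤ (∫₀ᴸ G(θ, ·)²) (∫₀ᴸ f''²)`.
Explicitly `∫₀ᴸ G(θ, ·)² = θ² (L - θ)² / (3L)`, which is largest at the midpoint `θ = L / 2`,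
where it equals `L³ / 48`.
-/

open Real MeasureTheory intervalIntegral

theorem sq_integral_mul_le_integral_sq_mul_integral_sq {α : Type*} [MeasurableSpace α]
    {μ : Measure α} {g h : α → ℝ} (hg : Integrable (fun x ↦ g x ^ 2) μ)
    (hh : Integrable (fun x ↦ h x ^ 2) μ) (hgh : Integrable (fun x ↦ g x * h x) μ) :
    (∫ x, g x * h x ∂μ) ^ 2 ≤ (∫ x, g x ^ 2 ∂μ) * ∫ x, h x ^ 2 ∂μ := by
  have hquad : ∀ t : ℝ, 0 ≤ (∫ x, g x ^ 2 ∂μ) * (t * t) + 2 * (∫ x, g x * h x ∂μ) * t +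
      ∫ x, h x ^ 2 ∂μ := by
    intro t
    have hexpand : ∫ x, (t * g x + h x) ^ 2 ∂μ =
        ∫ x, (t * t) * g x ^ 2 + (2 * t) * (g x * h x) + h x ^ 2 ∂μ := by
      congr 1; ext x; ring
    rw [integral_add ?_ hh, integral_add (hg.const_mul _) (hgh.const_mul _),
      MeasureTheory.integral_const_mul, MeasureTheory.integral_const_mul] at hexpand
    · have : 0 ≤ ∫ x, (t * g x + h x) ^ 2 ∂μ := integral_nonneg fun x ↦ sq_nonneg _
      linarith
    · exact (hg.const_mul _).add (hgh.const_mul _)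
  have := discrim_le_zero hquad
  rw [discrim] at this
  nlinarith

theorem sq_intervalIntegral_mul_le_integral_sq_mul_integral_sq {g h : ℝ → ℝ} {a b : ℝ}
    (hab : a ≤ b) (hg : IntervalIntegrable (fun x ↦ g x ^ 2) volume a b)
    (hh : IntervalIntegrable (fun x ↦ h x ^ 2) volume a b)
    (hgh : IntervalIntegrable (fun x ↦ g x * h x) volume a b) :
    (∫ x in a..b, g x * h x) ^ 2 ≤ (∫ x in a..b, g x ^ 2) * ∫ x in a..b, h x ^ 2 := by
  simp only [integral_of_le hab]
  exact sq_integral_mul_le_integral_sq_mul_integral_sq hg.1 hh.1 hgh.1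

theorem integral_sub_mul_deriv_deriv {f : ℝ → ℝ} (hf : ContDiff ℝ 2 f) (a b c : ℝ) :
    ∫ φ in a..b, (c - φ) * deriv (deriv f) φ =
      (c - b) * deriv f b - (c - a) * deriv f a + (f b - f a) := by
  have hf' : ContDiff ℝ 1 (deriv f) := hf.deriv'
  have hf'' : Continuous (deriv (deriv f)) := hf'.continuous_deriv_one
  rw [integral_mul_deriv_eq_deriv_mul (u := fun x ↦ c - x) (u' := fun _ ↦ -1)
      (fun x _ ↦ (hasDerivAt_id x).const_sub c)
      (fun x _ ↦ (hf'.differentiable one_ne_zero x).hasDerivAt)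
      intervalIntegrable_const (hf''.intervalIntegrable a b),
    intervalIntegral.integral_const_mul,
    integral_deriv_eq_sub (fun x _ ↦ hf.differentiable two_ne_zero x)
      (hf'.continuous.intervalIntegrable a b)]
  ring

/-- `φ ↦ dirichletGreen L θ φ` vanishes at `0` and `L`, and its second derivative is `δ_θ`. -/
noncomputable def dirichletGreen (L θ φ : ℝ) : ℝ := -(min φ θ * (L - max φ θ)) / L

section dirichletGreen

variable {L θ φ : ℝ}

theorem dirichletGreen_of_le (h : φ ≤ θ) : dirichletGreen L θ φ = (L - θ) / L * (0 - φ) := by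
  rw [dirichletGreen, min_eq_left h, max_eq_right h]
  ring

theorem dirichletGreen_of_ge (h : θ ≤ φ) : dirichletGreen L θ φ = -θ / L * (L - φ) := by
  rw [dirichletGreen, min_eq_right h, max_eq_left h]
  ring

theorem continuous_dirichletGreen (L θ : ℝ) : Continuous (dirichletGreen L θ) := by
  unfold dirichletGreen
  fun_prop

theorem integral_dirichletGreen_mul_deriv_deriv {f : ℝ → ℝ} (hf : ContDiff ℝ 2 f)
    (h0 : f 0 = 0) (hL : f L = 0) (hθ : θ ∈ Set.Icc 0 L) (hLpos : 0 < L) :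
    ∫ φ in (0 : ℝ)..L, dirichletGreen L θ φ * deriv (deriv f) φ = f θ := by
  have hint : Continuous fun φ ↦ dirichletGreen L θ φ * deriv (deriv f) φ :=
    (continuous_dirichletGreen L θ).mul hf.deriv'.continuous_deriv_one
  have hleft : ∫ φ in (0 : ℝ)..θ, dirichletGreen L θ φ * deriv (deriv f) φ =
      (L - θ) / L * ∫ φ in (0 : ℝ)..θ, (0 - φ) * deriv (deriv f) φ := by
    rw [← intervalIntegral.integral_const_mul]
    refine integral_congr fun φ hφ ↦ ?_
    rw [Set.uIcc_of_le hθ.1] at hφ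
    rw [dirichletGreen_of_le hφ.2, mul_assoc]
  have hright : ∫ φ in θ..L, dirichletGreen L θ φ * deriv (deriv f) φ =
      -θ / L * ∫ φ in θ..L, (L - φ) * deriv (deriv f) φ := by
    rw [← intervalIntegral.integral_const_mul]
    refine integral_congr fun φ hφ ↦ ?_
    rw [Set.uIcc_of_le hθ.2] at hφ
    rw [dirichletGreen_of_ge hφ.1, mul_assoc]
  rw [← integral_add_adjacent_intervals (hint.intervalIntegrable 0 θ)
    (hint.intervalIntegrable θ L), hleft, hright, integral_sub_mul_deriv_deriv hf,
    integral_sub_mul_deriv_deriv hf, h0, hL]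
  field_simp
  ring

theorem integral_dirichletGreen_sq (hθ : θ ∈ Set.Icc 0 L) (hLpos : 0 < L) :
    ∫ φ in (0 : ℝ)..L, dirichletGreen L θ φ ^ 2 = θ ^ 2 * (L - θ) ^ 2 / (3 * L) := by
  have hint : Continuous fun φ ↦ dirichletGreen L θ φ ^ 2 :=
    (continuous_dirichletGreen L θ).pow 2
  have hleft : ∫ φ in (0 : ℝ)..θ, dirichletGreen L θ φ ^ 2 =
      ((L - θ) / L) ^ 2 * ∫ φ in (0 : ℝ)..θ, φ ^ 2 := by
    rw [← intervalIntegral.integral_const_mul]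
    refine integral_congr fun φ hφ ↦ ?_
    rw [Set.uIcc_of_le hθ.1] at hφ
    rw [dirichletGreen_of_le hφ.2]
    ring
  have hright : ∫ φ in θ..L, dirichletGreen L θ φ ^ 2 =
      (θ / L) ^ 2 * ∫ φ in θ..L, (L - φ) ^ 2 := by
    rw [← intervalIntegral.integral_const_mul]
    refine integral_congr fun φ hφ ↦ ?_
    rw [Set.uIcc_of_le hθ.2] at hφ
    rw [dirichletGreen_of_ge hφ.1]
    ring
  rw [← integral_add_adjacent_intervals (hint.intervalIntegrable 0 θ)
    (hint.intervalIntegrable θ L), hleft, hright, integral_comp_sub_left (fun x ↦ x ^ 2),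
    integral_pow, integral_pow]
  field_simp
  ring

end dirichletGreen

theorem sq_le_mul_integral_sq_deriv_deriv {f : ℝ → ℝ} {L θ : ℝ} (hf : ContDiff ℝ 2 f)
    (h0 : f 0 = 0) (hL : f L = 0) (hθ : θ ∈ Set.Icc 0 L) :
    f θ ^ 2 ≤ L ^ 3 / 48 * ∫ φ in (0 : ℝ)..L, deriv (deriv f) φ ^ 2 := by
  obtain rfl | hLpos := (hθ.1.trans hθ.2).eq_or_lt
  · rw [le_antisymm hθ.2 hθ.1, h0]
    simp
  have hf'' : Continuous (deriv (deriv f)) := hf.deriv'.continuous_deriv_one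
  have hG := continuous_dirichletGreen L θ
  calc f θ ^ 2 = (∫ φ in (0 : ℝ)..L, dirichletGreen L θ φ * deriv (deriv f) φ) ^ 2 := by
        rw [integral_dirichletGreen_mul_deriv_deriv hf h0 hL hθ hLpos]
    _ ≤ (∫ φ in (0 : ℝ)..L, dirichletGreen L θ φ ^ 2) *
          ∫ φ in (0 : ℝ)..L, deriv (deriv f) φ ^ 2 :=
        sq_intervalIntegral_mul_le_integral_sq_mul_integral_sq hLpos.le
          ((hG.pow 2).intervalIntegrable _ _) ((hf''.pow 2).intervalIntegrable _ _)
          ((hG.mul hf'').intervalIntegrable _ _)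
    _ = θ ^ 2 * (L - θ) ^ 2 / (3 * L) * ∫ φ in (0 : ℝ)..L, deriv (deriv f) φ ^ 2 := by
        rw [integral_dirichletGreen_sq hθ hLpos]
    _ ≤ L ^ 3 / 48 * ∫ φ in (0 : ℝ)..L, deriv (deriv f) φ ^ 2 := by
        have hAMGM : θ * (L - θ) ≤ L ^ 2 / 4 := by nlinarith [sq_nonneg (2 * θ - L)]
        have hpeak : θ ^ 2 * (L - θ) ^ 2 / (3 * L) ≤ L ^ 3 / 48 := by
          rw [div_le_iff₀ (by positivity)]
          calc θ ^ 2 * (L - θ) ^ 2 = (θ * (L - θ)) ^ 2 := by ring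
            _ ≤ (L ^ 2 / 4) ^ 2 := by gcongr; exact mul_nonneg hθ.1 (sub_nonneg.mpr hθ.2)
            _ = L ^ 3 / 48 * (3 * L) := by ring
        gcongr
        exact integral_nonneg hLpos.le fun _ _ ↦ sq_nonneg _

theorem pointwise_sq_bound_general (n : ℕ) (f : ℝ → ℝ)
    (hf : ContDiff ℝ 2 f) (h0 : f 0 = 0) (h1 : f (Real.pi / n) = 0)
    (θ : ℝ) (hθ : θ ∈ Set.Icc (0 : ℝ) (Real.pi / n)) :
    (f θ) ^ 2 ≤ (Real.pi ^ 3 / (48 * (n : ℝ) ^ 3)) *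
      ∫ φ in (0 : ℝ)..(Real.pi / n), (deriv (deriv f) φ) ^ 2 := by
  rw [show Real.pi ^ 3 / (48 * (n : ℝ) ^ 3) = (Real.pi / n) ^ 3 / 48 by
    rw [div_pow, div_div, mul_comm]]
  exact sq_le_mul_integral_sq_deriv_deriv hf h0 h1 hθ

/-- If `f ∈ W^{2,2}(0,π/n)` (here: `f` twice continuously differentiable) vanishes at
both endpoints, then for every `θ ∈ [0, π/n]`,
`f(θ)² ≤ (π³/(48n³)) ∫₀^{π/n} f''(φ)² dφ`. -/
theorem pointwise_sq_bound (n : ℕ) (hn : 1 ≤ n) (f : ℝ → ℝ)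
    (hf : ContDiff ℝ 2 f) (h0 : f 0 = 0) (h1 : f (Real.pi / n) = 0)
    (θ : ℝ) (hθ : θ ∈ Set.Icc (0 : ℝ) (Real.pi / n)) :
    (f θ) ^ 2 ≤ (Real.pi ^ 3 / (48 * (n : ℝ) ^ 3)) *
      ∫ φ in (0 : ℝ)..(Real.pi / n), (deriv (deriv f) φ) ^ 2 :=
  pointwise_sq_bound_general n f hf h0 h1 θ hθ
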